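/- arXiv:2602.19602 — 6 statements merged into one kernel-verified Lean document; each statement's English description precedes it below -/
import Mathlib

section
/- Let k, ℓ ≥ 2 be multiplicatively independent integers. Then the set {k^s / ℓ^t : s, t ∈ ℕ} is dense in the positive reals ℝ_{>0}. -/
/-!
Taking logarithms, it suffices that the additive monoid generated by `log k` and `-log ℓ` is
dense in `ℝ`. Dirichlet's approximation theorem for `log k / log ℓ` yields elements
`s log k - t log ℓ` of arbitrarily small absolute value, nonzero by multiplicative independence.
In an archimedean group, a submonoid containing a positive element, a negative element and
arbitrarily small nonzero elements is dense: shift the target far enough in the direction of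
the small element's sign using the element of opposite sign, then walk back in small steps.
-/

open Set

theorem exists_nsmul_add_nsmul_mem_Ioo {G : Type*} [AddCommGroup G] [LinearOrder G]
    [IsOrderedAddMonoid G] [Archimedean G] {b c u v : G} (hb : b < 0) (hc : 0 < c)
    (hcuv : c < v - u) : ∃ n t : ℕ, n • c + t • b ∈ Ioo u v := by
  obtain ⟨t, ht⟩ := Archimedean.arch (-u) (neg_pos.2 hb)
  obtain ⟨m, ⟨hm_lo, hm_hi⟩, -⟩ := existsUnique_add_zsmul_mem_Ioc hc (t • b) u
  have htb : t • b ≤ u := by rwa [smul_neg, neg_le_neg_iff] at ht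
  have hm : 0 < m := by
    rw [← zsmul_lt_zsmul_iff_left hc, zero_zsmul]
    exact lt_add_iff_pos_right _ |>.1 (htb.trans_lt hm_lo)
  lift m to ℕ using hm.le
  rw [natCast_zsmul, add_comm] at hm_lo hm_hi
  exact ⟨m, t, hm_lo, hm_hi.trans_lt (lt_sub_iff_add_lt'.1 hcuv)⟩

theorem AddSubmonoid.dense_of_exists_abs_lt {G : Type*} [AddCommGroup G] [LinearOrder G]
    [IsOrderedAddMonoid G] [Archimedean G] [TopologicalSpace G] [OrderTopology G]
    (M : AddSubmonoid G) {a b : G} (ha : a ∈ M) (ha₀ : 0 < a) (hb : b ∈ M) (hb₀ : b < 0)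
    (hsmall : ∀ ε > 0, ∃ c ∈ M, c ≠ 0 ∧ |c| < ε) : Dense (M : Set G) := by
  have : Nontrivial G := ⟨⟨a, 0, ha₀.ne'⟩⟩
  refine dense_of_exists_between fun u v huv => ?_
  obtain ⟨c, hcM, hc₀, hcuv⟩ := hsmall (v - u) (sub_pos.2 huv)
  rcases hc₀.lt_or_gt with hc | hc
  · obtain ⟨n, t, hlo, hhi⟩ := exists_nsmul_add_nsmul_mem_Ioo (neg_lt_zero.2 ha₀)
      (neg_pos.2 hc) (u := -v) (v := -u) (by rwa [neg_sub_neg, ← abs_of_neg hc])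
    rw [smul_neg, smul_neg, ← neg_add] at hlo hhi
    exact ⟨n • c + t • a, add_mem (nsmul_mem hcM n) (nsmul_mem ha t),
      neg_lt_neg_iff.1 hhi, neg_lt_neg_iff.1 hlo⟩
  · obtain ⟨n, t, hlo, hhi⟩ := exists_nsmul_add_nsmul_mem_Ioo hb₀ hc (abs_of_pos hc ▸ hcuv)
    exact ⟨n • c + t • b, add_mem (nsmul_mem hcM n) (nsmul_mem hb t), hlo, hhi⟩

theorem Real.exists_nat_abs_mul_sub_mul_lt {a b ε : ℝ} (ha : 0 ≤ a) (hb : 0 < b) (hε : 0 < ε) :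
    ∃ s t : ℕ, 0 < s ∧ |s * a - t * b| < ε := by
  obtain ⟨n, hn⟩ := exists_nat_one_div_lt (div_pos hε hb)
  obtain ⟨s, hs, -, hsr⟩ := Real.exists_nat_abs_mul_sub_round_le (a / b) n.succ_pos
  have hround : 0 ≤ round (s * (a / b)) := by
    rw [round_eq]; exact Int.floor_nonneg.2 (by positivity)
  lift round (s * (a / b)) to ℕ using hround with t ht
  refine ⟨s, t, hs, ?_⟩
  calc |s * a - t * b| = |(s * (a / b) - t) * b| := by
        rw [sub_mul, mul_assoc, div_mul_cancel₀ _ hb.ne']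
    _ = |s * (a / b) - t| * b := by rw [abs_mul, abs_of_pos hb]
    _ ≤ 1 / (n.succ + 1) * b := by gcongr; exact_mod_cast hsr
    _ < ε := by
        rw [← lt_div_iff₀ hb]
        refine lt_of_le_of_lt ?_ hn
        gcongr; simp

theorem Nat.pow_eq_pow_iff_mul_log_eq {k l : ℕ} (hk : 0 < k) (hl : 0 < l) (s t : ℕ) :
    k ^ s = l ^ t ↔ s * Real.log k = t * Real.log l := by
  rw [← Real.log_pow, ← Real.log_pow,
    Real.log_injOn_pos.eq_iff (mem_Ioi.2 (by positivity)) (mem_Ioi.2 (by positivity))]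
  norm_cast

/-- For multiplicatively independent `k, ℓ ≥ 2`, the set `{k^s/ℓ^t : s,t ∈ ℕ}`
is dense in the positive reals. -/
theorem powers_ratio_dense (k l : ℕ) (hk : 2 ≤ k) (hl : 2 ≤ l)
    (hmi : ∀ s t : ℕ, k ^ s = l ^ t → s = 0 ∧ t = 0) :
    ∀ x : ℝ, 0 < x →
      x ∈ closure {r : ℝ | ∃ s t : ℕ, r = (k : ℝ) ^ s / (l : ℝ) ^ t} := by
  intro x hx
  have hlogk : 0 < Real.log k := Real.log_pos (by exact_mod_cast hk)
  have hlogl : 0 < Real.log l := Real.log_pos (by exact_mod_cast hl)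
  set M := AddSubmonoid.closure {Real.log k, -Real.log l}
  have hM : ∀ s t : ℕ, s • Real.log k + t • -Real.log l ∈ M := fun s t =>
    (AddSubmonoid.mem_closure_pair _ _ _).2 ⟨s, t, rfl⟩
  have hdense : Dense (M : Set ℝ) := by
    refine M.dense_of_exists_abs_lt (AddSubmonoid.subset_closure (by simp)) hlogk
      (AddSubmonoid.subset_closure (by simp)) (neg_neg_of_pos hlogl) fun ε hε => ?_
    obtain ⟨s, t, hs, hst⟩ := Real.exists_nat_abs_mul_sub_mul_lt hlogk.le hlogl hε
    refine ⟨_, hM s t, fun h => hs.ne' (hmi s t ?_).1, ?_⟩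
    · rw [Nat.pow_eq_pow_iff_mul_log_eq (by omega) (by omega)]
      simpa [sub_eq_zero, ← sub_eq_add_neg] using h
    · simpa [← sub_eq_add_neg] using hst
  have hexp : Real.exp '' M ⊆ {r : ℝ | ∃ s t : ℕ, r = (k : ℝ) ^ s / (l : ℝ) ^ t} := by
    rintro _ ⟨_, hy, rfl⟩
    obtain ⟨s, t, rfl⟩ := (AddSubmonoid.mem_closure_pair _ _ _).1 hy
    refine ⟨s, t, ?_⟩
    rw [smul_neg, ← sub_eq_add_neg, Real.exp_sub, nsmul_eq_mul, nsmul_eq_mul, ← Real.log_pow,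
      ← Real.log_pow, Real.exp_log (by positivity), Real.exp_log (by positivity)]
  rw [← Real.exp_log hx]
  exact closure_mono hexp <| image_closure_subset_closure_image Real.continuous_exp
    ⟨_, hdense.closure_eq ▸ mem_univ _, rfl⟩
end

section
/- Let k, ℓ ≥ 2 be integers and let I ⊆ ℝ_{>0} be a non-empty open interval. Then there exists a non-empty open interval J ⊆ (0,1) such that for every t ∈ ℕ with fr(t·log_k(ℓ)) ∈ J, there exists s ∈ ℕ satisfying k^s/ℓ^t ∈ I. -/
/-- For `k, ℓ ≥ 2` and a non-empty open interval `I = (a,b) ⊆ ℝ_{>0}`, there is a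
non-empty open interval `J = (c,d) ⊆ (0,1)` such that for every `t ∈ ℕ` with
`fr(t·log_k ℓ) ∈ J`, there exists `s ∈ ℕ` with `k^s/ℓ^t ∈ I`. -/
theorem exists_interval_for_powers (k l : ℕ) (hk : 2 ≤ k) (hl : 2 ≤ l)
    (a b : ℝ) (ha : 0 ≤ a) (hab : a < b) :
    ∃ c d : ℝ, c < d ∧ Set.Ioo c d ⊆ Set.Ioo (0 : ℝ) 1 ∧
      ∀ t : ℕ, Int.fract ((t : ℝ) * (Real.log l / Real.log k)) ∈ Set.Ioo c d →
        ∃ s : ℕ, (k : ℝ) ^ s / (l : ℝ) ^ t ∈ Set.Ioo a b := by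
  classical
  have hk1 : (1:ℝ) < (k:ℝ) := by exact_mod_cast lt_of_lt_of_le one_lt_two hk
  have hl1 : (1:ℝ) < (l:ℝ) := by exact_mod_cast lt_of_lt_of_le one_lt_two hl
  have hk0 : (0:ℝ) < (k:ℝ) := lt_trans one_pos hk1
  have hl0 : (0:ℝ) < (l:ℝ) := lt_trans one_pos hl1
  have hlk : 0 < Real.log k := Real.log_pos hk1
  have hll : 0 < Real.log l := Real.log_pos hl1
  set α : ℝ := Real.log l / Real.log k with hαdef
  have hα0 : 0 < α := div_pos hll hlk
  have hb0 : 0 < b := lt_of_le_of_lt ha hab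
  set a' : ℝ := max a (b/2) with ha'def
  have ha'0 : 0 < a' := lt_of_lt_of_le (half_pos hb0) (le_max_right _ _)
  have ha'b : a' < b := max_lt hab (half_lt_self hb0)
  set A : ℝ := Real.log a' / Real.log k with hAdef
  set B : ℝ := Real.log b / Real.log k with hBdef
  have hAB : A < B := by
    have := Real.log_lt_log ha'0 ha'b
    exact div_lt_div_of_pos_right this hlk
  set m : ℤ := ⌊A⌋ + 1 with hmdef
  have hmA : A < (m:ℝ) := by
    have := Int.lt_floor_add_one A
    push_cast [hmdef]
    linarith
  have hmB : (m:ℝ) - B < 1 := by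
    have := Int.floor_le A
    push_cast [hmdef]
    linarith
  set c0 : ℝ := max 0 ((m:ℝ) - B) with hc0def
  set d0 : ℝ := min 1 ((m:ℝ) - A) with hd0def
  have hc0d0 : c0 < d0 :=
    max_lt (lt_min one_pos (by linarith)) (lt_min hmB (by linarith))
  -- the cutoff time
  set T : ℕ := (⌈(1 - (m:ℝ)) / α⌉).toNat with hTdef
  have key : ∀ t : ℕ, T ≤ t → (1:ℝ) - m ≤ (t:ℝ) * α := by
    intro t ht
    have h1 : (1 - (m:ℝ)) / α ≤ (T:ℝ) := by
      have h0 : (⌈(1 - (m:ℝ)) / α⌉ : ℤ) ≤ (T : ℤ) := by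
        rw [hTdef]; exact Int.self_le_toNat _
      calc (1 - (m:ℝ)) / α ≤ (⌈(1 - (m:ℝ)) / α⌉ : ℝ) := Int.le_ceil _
        _ ≤ (T:ℝ) := by exact_mod_cast h0
    have h2 : (1 - (m:ℝ)) / α ≤ (t:ℝ) := h1.trans (by exact_mod_cast ht)
    exact (div_le_iff₀ hα0).mp h2
  -- finite set of fractional parts to avoid
  set S : Finset ℝ := (Finset.range T).image (fun t : ℕ => Int.fract ((t:ℝ) * α)) with hSdef
  set P : Finset ℝ := insert c0 (S.filter (fun x => c0 ≤ x ∧ x < d0)) with hPdef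
  have hPne : P.Nonempty := ⟨c0, Finset.mem_insert_self _ _⟩
  set c : ℝ := P.max' hPne with hcdef
  have hcc0 : c0 ≤ c := Finset.le_max' _ _ (Finset.mem_insert_self _ _)
  have hcd0 : c < d0 := by
    rw [hcdef, Finset.max'_lt_iff]
    intro y hy
    rcases Finset.mem_insert.mp hy with h | h
    · rw [h]; exact hc0d0
    · exact (Finset.mem_filter.mp h).2.2
  have havoid : ∀ t : ℕ, t < T → Int.fract ((t:ℝ) * α) ∉ Set.Ioo c d0 := by
    intro t ht hmem
    have hS : Int.fract ((t:ℝ) * α) ∈ S := by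
      rw [hSdef]
      exact Finset.mem_image.mpr ⟨t, Finset.mem_range.mpr ht, rfl⟩
    have hP : Int.fract ((t:ℝ) * α) ∈ P := by
      rw [hPdef]
      exact Finset.mem_insert_of_mem
        (Finset.mem_filter.mpr ⟨hS, le_trans hcc0 hmem.1.le, hmem.2⟩)
    have := Finset.le_max' P _ hP
    rw [← hcdef] at this
    exact absurd hmem.1 (not_lt.mpr this)
  refine ⟨c, d0, hcd0, ?_, ?_⟩
  · intro x hx
    refine ⟨lt_of_le_of_lt (le_trans (le_max_left _ _) hcc0) hx.1,
      lt_of_lt_of_le hx.2 (min_le_left _ _)⟩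
  · intro t hf
    have hTt : T ≤ t := by
      by_contra h
      exact havoid t (not_le.mp h) hf
    have h1m : (1:ℝ) - m ≤ (t:ℝ) * α := key t hTt
    have hfloor : -m < ⌊(t:ℝ) * α⌋ := by
      have h := Int.lt_floor_add_one ((t:ℝ) * α)
      have : (-m : ℝ) < (⌊(t:ℝ) * α⌋ : ℝ) := by linarith
      exact_mod_cast this
    have hnn : 0 ≤ ⌊(t:ℝ) * α⌋ + m := by linarith
    refine ⟨(⌊(t:ℝ) * α⌋ + m).toNat, ?_⟩
    set s : ℕ := (⌊(t:ℝ) * α⌋ + m).toNat with hsdef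
    have hs : (s:ℝ) = (⌊(t:ℝ) * α⌋ : ℝ) + (m:ℝ) := by
      have := Int.toNat_of_nonneg hnn
      rw [hsdef]
      exact_mod_cast congrArg (Int.cast : ℤ → ℝ) this
    have hfract : Int.fract ((t:ℝ) * α) = (t:ℝ) * α - ⌊(t:ℝ) * α⌋ := rfl
    -- bound s - tα
    have hd0A : d0 ≤ (m:ℝ) - A := min_le_right _ _
    have hc0B : (m:ℝ) - B ≤ c0 := le_max_right _ _
    have hlow : A < (s:ℝ) - (t:ℝ) * α := by
      have := hf.2
      rw [hfract] at this
      rw [hs]; linarith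
    have hhigh : (s:ℝ) - (t:ℝ) * α < B := by
      have := hf.1
      rw [hfract] at this
      rw [hs]; linarith
    -- translate via exp/log
    have eα : α * Real.log k = Real.log l := div_mul_cancel₀ _ hlk.ne'
    have eA : A * Real.log k = Real.log a' := div_mul_cancel₀ _ hlk.ne'
    have eB : B * Real.log k = Real.log b := div_mul_cancel₀ _ hlk.ne'
    have expand : ((s:ℝ) - (t:ℝ) * α) * Real.log k
        = (s:ℝ) * Real.log k - (t:ℝ) * Real.log l := by
      rw [sub_mul, mul_assoc, eα]
    have hlog1 : Real.log a' < (s:ℝ) * Real.log k - (t:ℝ) * Real.log l := by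
      have := mul_lt_mul_of_pos_right hlow hlk
      rw [expand, eA] at this; exact this
    have hlog2 : (s:ℝ) * Real.log k - (t:ℝ) * Real.log l < Real.log b := by
      have := mul_lt_mul_of_pos_right hhigh hlk
      rw [expand, eB] at this; exact this
    have hq : (k:ℝ) ^ s / (l:ℝ) ^ t
        = Real.exp ((s:ℝ) * Real.log k - (t:ℝ) * Real.log l) := by
      rw [Real.exp_sub, ← Real.log_pow, ← Real.log_pow,
        Real.exp_log (pow_pos hk0 s), Real.exp_log (pow_pos hl0 t)]
    constructor
    · have : a' < (k:ℝ) ^ s / (l:ℝ) ^ t := by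
        rw [hq, ← Real.exp_log ha'0]
        exact Real.exp_lt_exp.mpr hlog1
      exact lt_of_le_of_lt (le_max_left _ _) this
    · rw [hq, ← Real.exp_log hb0]
      exact Real.exp_lt_exp.mpr hlog2
end

section
/- Let k, ℓ ≥ 2 be multiplicatively independent integers. If a finite system of strict linear homogeneous inequalities in two variables with rational coefficients has a solution (u,v) with u, v > 0 real, then it has infinitely many solutions (u,v) with u a power of k and v a power of ℓ. -/
/-!
A point (u, v) with u > 0 solves the system iff the ratio v / u lies in a set of ratios that is
open, so it suffices to hit a neighbourhood of log (v / u) by the numbers t log ℓ - s log k with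
s, t ∈ ℕ. Multiplicative independence makes log ℓ / log k irrational, so the natural multiples of
log ℓ are dense modulo log k, and even frequently close to any point as t → ∞ (in a compact group
the closures of the ℕ- and ℤ-orbits agree). Taking t large forces the correcting multiple s of
log k to be a natural number, and distinct t give distinct solutions.
-/

open Filter Topology

theorem mul_add_mul_pos_iff_add_mul_div_pos {a b u v : ℝ} (hu : 0 < u) :
    0 < a * u + b * v ↔ 0 < a + b * (v / u) := by
  rw [show a * u + b * v = (a + b * (v / u)) * u by field_simp, mul_pos_iff_of_pos_right hu]

theorem exp_natCast_mul_log_sub_natCast_mul_log {x y : ℝ} (hx : 0 < x) (hy : 0 < y) (s t : ℕ) :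
    Real.exp (t * Real.log y - s * Real.log x) = y ^ t / x ^ s := by
  rw [Real.exp_sub, Real.exp_nat_mul, Real.exp_nat_mul, Real.exp_log hx, Real.exp_log hy]

theorem frequently_exists_natCast_mul_sub_natCast_mul {a b x : ℝ} {P : ℝ → Prop} (ha : 0 < a)
    (hb : 0 < b) (hab : Irrational (a / b)) (hP : ∀ᶠ y in 𝓝 x, P y) :
    ∃ᶠ t : ℕ in atTop, ∃ s : ℕ, P (t * a - s * b) := by
  have := Fact.mk hb
  have hdense : DenseRange fun n : ℕ ↦ n • (a : AddCircle b) :=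
    denseRange_zsmul_iff_nsmul.1 (AddCircle.denseRange_zsmul_coe_iff.2 hab)
  have hclust : MapClusterPt (x : AddCircle b) atTop fun n : ℕ ↦ n • (a : AddCircle b) :=
    ((mapClusterPt_atTop_nsmul_tfae _ _).out 0 2).2 (hdense.closure_eq ▸ Set.mem_univ _)
  have hU : ((↑) : ℝ → AddCircle b) '' {y | P y ∧ y < x + 1} ∈ 𝓝 (x : AddCircle b) :=
    QuotientAddGroup.isOpenMap_coe.image_mem_nhds (hP.and (eventually_lt_nhds (lt_add_one x)))
  have hlarge : ∀ᶠ t : ℕ in atTop, x + 1 ≤ t * a :=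
    (tendsto_natCast_atTop_atTop.atTop_mul_const ha).eventually_ge_atTop _
  refine ((hclust.frequently hU).and_eventually hlarge).mono ?_
  rintro t ⟨⟨y, ⟨hPy, hy⟩, hyt⟩, ht⟩
  rw [← AddCircle.coe_nsmul, QuotientAddGroup.eq, AddSubgroup.mem_zmultiples_iff] at hyt
  obtain ⟨m, hm⟩ := hyt
  rw [zsmul_eq_mul, nsmul_eq_mul] at hm
  have hm0 : 0 ≤ m := by
    have : (0 : ℝ) < m * b := by linarith
    exact_mod_cast (pos_of_mul_pos_left this hb.le).le
  refine ⟨m.toNat, ?_⟩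
  convert hPy using 1
  rw [show ((m.toNat : ℕ) : ℝ) = m by exact_mod_cast Int.toNat_of_nonneg hm0]
  linarith

theorem irrational_log_div_log {k l : ℕ} (hk : 1 < k) (hl : 1 < l)
    (hkl : ∀ s t : ℕ, k ^ s = l ^ t → s = 0 ∧ t = 0) :
    Irrational (Real.log l / Real.log k) := by
  have hlogk : 0 < Real.log k := Real.log_pos (by exact_mod_cast hk)
  have hlogl : 0 < Real.log l := Real.log_pos (by exact_mod_cast hl)
  rw [irrational_iff_ne_rational]
  intro a b hb h
  have hba : (b : ℝ) * Real.log l = a * Real.log k := by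
    field_simp at h
    linarith
  have hnat : (b.natAbs : ℝ) * Real.log l = a.natAbs * Real.log k := by
    simpa [abs_mul, abs_of_pos hlogk, abs_of_pos hlogl] using congrArg abs hba
  have hpow : k ^ a.natAbs = l ^ b.natAbs := by
    have : ((k ^ a.natAbs : ℕ) : ℝ) = ((l ^ b.natAbs : ℕ) : ℝ) := by
      refine Real.log_injOn_pos (by simp; positivity) (by simp; positivity) ?_
      push_cast
      rw [Real.log_pow, Real.log_pow, hnat]
    exact_mod_cast this
  exact hb (Int.natAbs_eq_zero.1 (hkl _ _ hpow).2)

/-- If a finite system of strict linear homogeneous inequalities with rational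
coefficients in two variables has a positive real solution, then it has infinitely
many solutions with the first variable a power of `k` and the second a power of `ℓ`,
where `k, ℓ ≥ 2` are multiplicatively independent. -/
theorem infinitely_many_power_solutions (k l : ℕ) (hk : 2 ≤ k) (hl : 2 ≤ l)
    (hmi : ∀ s t : ℕ, k ^ s = l ^ t → s = 0 ∧ t = 0)
    (S : Finset (ℚ × ℚ))
    (hsol : ∃ u v : ℝ, 0 < u ∧ 0 < v ∧
      ∀ p ∈ S, (p.1 : ℝ) * u + (p.2 : ℝ) * v > 0) :
    {uv : ℝ × ℝ | (∃ s : ℕ, uv.1 = (k : ℝ) ^ s) ∧ (∃ t : ℕ, uv.2 = (l : ℝ) ^ t) ∧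
      ∀ p ∈ S, (p.1 : ℝ) * uv.1 + (p.2 : ℝ) * uv.2 > 0}.Infinite := by
  obtain ⟨u, v, hu, hv, huv⟩ := hsol
  have hk1 : (1 : ℝ) < k := by exact_mod_cast hk
  have hl1 : (1 : ℝ) < l := by exact_mod_cast hl
  have hratio : ∀ᶠ x in 𝓝 (Real.log (v / u)), ∀ p ∈ S, 0 < (p.1 : ℝ) + p.2 * Real.exp x := by
    refine (eventually_all_finset S).2 fun p hp ↦ ?_
    refine Tendsto.eventually_const_lt ?_ ((by fun_prop : Continuous _).tendsto _)
    rw [Real.exp_log (div_pos hv hu)]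
    exact (mul_add_mul_pos_iff_add_mul_div_pos hu).1 (huv p hp)
  have hexps := frequently_exists_natCast_mul_sub_natCast_mul (Real.log_pos hl1)
    (Real.log_pos hk1) (irrational_log_div_log (by omega) (by omega) hmi) hratio
  set X := {uv : ℝ × ℝ | (∃ s : ℕ, uv.1 = (k : ℝ) ^ s) ∧ (∃ t : ℕ, uv.2 = (l : ℝ) ^ t) ∧
      ∀ p ∈ S, (p.1 : ℝ) * uv.1 + (p.2 : ℝ) * uv.2 > 0}
  have hT : {t : ℕ | ∃ s : ℕ, ((k : ℝ) ^ s, (l : ℝ) ^ t) ∈ X}.Infinite := by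
    refine Nat.frequently_atTop_iff_infinite.1 (hexps.mono ?_)
    rintro t ⟨s, hs⟩
    refine ⟨s, ⟨s, rfl⟩, ⟨t, rfl⟩, fun p hp ↦ ?_⟩
    rw [gt_iff_lt, mul_add_mul_pos_iff_add_mul_div_pos (by positivity),
      ← exp_natCast_mul_log_sub_natCast_mul_log (by positivity) (by positivity)]
    exact hs p hp
  refine Set.Infinite.of_image Prod.snd <| (hT.image (pow_right_injective₀
    (by positivity) hl1.ne').injOn).mono ?_
  rintro _ ⟨t, ⟨s, hs⟩, rfl⟩
  exact ⟨_, hs, rfl⟩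
end

section
/- Let ℓ ≥ 2 be an integer and let M be a discretely ordered abelian group with a distinguished subset A_ℓ of positive elements satisfying: (i) 1 ∈ A_ℓ; (ii) for all x, x ∈ A_ℓ iff ℓ·x ∈ A_ℓ; (iii) for every a ∈ A_ℓ and every n ≥ 1 there is no c ∈ A_ℓ with ℓ^{n-1}·a < c < ℓ^n·a strictly. Then for any Archimedean class K of M and any α ∈ K ∩ A_ℓ, we have K ∩ A_ℓ ⊆ ℓ^ℤ · α, i.e., every α' ∈ K ∩ A_ℓ equals ℓ^m · α or satisfies ℓ^m · α' = ℓ^n · α for some m, n ∈ ℕ. -/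
private lemma rep_aux {M : Type*} [AddCommGroup M] [LinearOrder M] [IsOrderedAddMonoid M]
    (l : ℕ) (hl : 2 ≤ l) (A : Set M)
    (hpos : ∀ a ∈ A, 0 < a)
    (hB : ∀ a ∈ A, ∀ n : ℕ, 0 < n →
      ∀ c ∈ A, ¬ (l ^ (n - 1) • a < c ∧ c < l ^ n • a)) :
    ∀ α ∈ A, ∀ α' ∈ A, α' ≤ α → (∃ m : ℕ, α < m • α') →
      ∃ n : ℕ, α = l ^ n • α' := by
  intro α hα α' hα' hle ⟨m, hm⟩
  have hpos' : 0 < α' := hpos _ hα'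
  have hex : ∃ n : ℕ, α ≤ l ^ n • α' := by
    refine ⟨m, le_trans hm.le ?_⟩
    exact nsmul_le_nsmul_left hpos'.le (Nat.lt_pow_self (n := m) (by omega)).le
  classical
  set n0 := Nat.find hex with hn0
  have hP : α ≤ l ^ n0 • α' := Nat.find_spec hex
  rcases Nat.eq_zero_or_pos n0 with h0 | hposn
  · refine ⟨0, le_antisymm ?_ ?_⟩
    · simpa [h0] using hP
    · simpa using hle
  · obtain ⟨k, hk⟩ := Nat.exists_eq_add_of_lt hposn
    have hk' : n0 = k + 1 := by omega
    have hmin : ¬ α ≤ l ^ k • α' := Nat.find_min hex (by omega)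
    have hlt : l ^ k • α' < α := lt_of_not_ge hmin
    have := hB α' hα' (k + 1) (by omega) α hα
    simp only [Nat.add_sub_cancel] at this
    have heq : α = l ^ (k + 1) • α' := by
      rcases lt_or_eq_of_le (hk' ▸ hP) with h | h
      · exact absurd ⟨hlt, h⟩ this
      · exact h
    exact ⟨k + 1, heq⟩

/-- In a discretely ordered abelian group with a set `A` of positive elements
containing `1`, closed under multiplication by `ℓ`, and satisfying the basic
inequality axiom (no element of `A` strictly between `ℓ^{n-1}·a` and `ℓ^n·a`),
any two elements of `A` in the same Archimedean class differ by a power of `ℓ`. -/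
theorem rep_per_archimedean_class {M : Type*} [AddCommGroup M] [LinearOrder M] [IsOrderedAddMonoid M]
    (l : ℕ) (hl : 2 ≤ l) (one : M) (A : Set M)
    (h01 : 0 < one) (hdisc : ∀ x : M, x ≤ 0 ∨ one ≤ x)
    (hpos : ∀ a ∈ A, 0 < a)
    (honeA : one ∈ A)
    (hmul : ∀ x : M, x ∈ A ↔ l • x ∈ A)
    (hB : ∀ a ∈ A, ∀ n : ℕ, 0 < n →
      ∀ c ∈ A, ¬ (l ^ (n - 1) • a < c ∧ c < l ^ n • a)) :
    ∀ α ∈ A, ∀ α' ∈ A,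
      (∃ m : ℕ, α < m • α') → (∃ n : ℕ, α' < n • α) →
      ∃ m n : ℕ, l ^ m • α' = l ^ n • α := by
  intro α hα α' hα' hm hn
  rcases le_total α' α with h | h
  · obtain ⟨k, hk⟩ := rep_aux l hl A hpos hB α hα α' hα' h hm
    exact ⟨k, 0, by simp [hk]⟩
  · obtain ⟨k, hk⟩ := rep_aux l hl A hpos hB α' hα' α hα h hn
    exact ⟨0, k, by simp [hk]⟩
end

section
/- Let k, ℓ ≥ 2 be multiplicatively independent integers, let b₁ < b₂ be positive reals and let a < b₁. Then for every t₀ ∈ ℕ there exist s, t ∈ ℕ with t > t₀ and b₁ < k^s/ℓ^t < b₂; in particular the exponents t realizing membership of k^s/ℓ^t in a fixed open interval can be taken arbitrarily large. -/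
/-!
Put `θ = log k / log ℓ`. Multiplicative independence makes `θ` irrational, so Dirichlet's
approximation theorem gives `s, t ∈ ℕ` with `s log k - t log ℓ` nonzero and arbitrarily small.
Since the additive monoid `{s log k - t log ℓ}` also contains the positive element `log k` and
the negative element `-log ℓ`, walking from far away by multiples of such a small element enters
any interval: the monoid is dense in `ℝ`, so `k^s / ℓ^t` is dense in `(0, ∞)`. Large `t` comes for
free by aiming at `(b₁ ℓ^(t₀+1), b₂ ℓ^(t₀+1))` and then dividing by `ℓ^(t₀+1)`.
-/

open Set Real

lemma exists_add_nsmul_mem_Ioo_of_pos {x g c d : ℝ} (hg : 0 < g) (hgd : g < d - c)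
    (hx : x ≤ c) : ∃ j : ℕ, x + j • g ∈ Ioo c d := by
  refine ⟨⌊(c - x) / g⌋₊ + 1, ?_, ?_⟩
  · have := Nat.lt_floor_add_one ((c - x) / g)
    rw [div_lt_iff₀ hg] at this
    push_cast [nsmul_eq_mul]
    linarith
  · have := Nat.floor_le (div_nonneg (sub_nonneg.2 hx) hg.le)
    rw [le_div_iff₀ hg] at this
    push_cast [nsmul_eq_mul]
    linarith

lemma exists_add_nsmul_mem_Ioo_of_neg {x g c d : ℝ} (hg : g < 0) (hgd : -g < d - c)
    (hx : d ≤ x) : ∃ j : ℕ, x + j • g ∈ Ioo c d := by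
  obtain ⟨j, hj⟩ := exists_add_nsmul_mem_Ioo_of_pos (x := -x) (c := -d) (d := -c)
    (neg_pos.2 hg) (by linarith) (neg_le_neg hx)
  refine ⟨j, ?_, ?_⟩ <;> simp only [smul_neg, mem_Ioo] at hj <;> linarith [hj.1, hj.2]

theorem AddSubmonoid.dense_of_exists_abs_lt_s9 {M : AddSubmonoid ℝ} {p q : ℝ} (hpM : p ∈ M)
    (hp : 0 < p) (hqM : q ∈ M) (hq : q < 0) (hsmall : ∀ ε > 0, ∃ g ∈ M, g ≠ 0 ∧ |g| < ε) :
    Dense (M : Set ℝ) := by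
  rw [dense_iff_exists_between]
  intro c d hcd
  obtain ⟨g, hgM, hg0, hgε⟩ := hsmall (d - c) (sub_pos.2 hcd)
  rcases hg0.lt_or_gt with hg | hg
  · obtain ⟨N, hN⟩ := Archimedean.arch d hp
    obtain ⟨j, hj⟩ := exists_add_nsmul_mem_Ioo_of_neg hg (by rwa [abs_of_neg hg] at hgε) hN
    exact ⟨_, M.add_mem (M.nsmul_mem hpM N) (M.nsmul_mem hgM j), hj⟩
  · obtain ⟨N, hN⟩ := Archimedean.arch (-c) (neg_pos.2 hq)
    obtain ⟨j, hj⟩ := exists_add_nsmul_mem_Ioo_of_pos hg (by rwa [abs_of_pos hg] at hgε)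
      (x := N • q) (by rw [smul_neg] at hN; linarith)
    exact ⟨_, M.add_mem (M.nsmul_mem hqM N) (M.nsmul_mem hgM j), hj⟩

lemma Irrational.exists_nat_mul_sub_nat_ne_zero_abs_lt {ξ ε : ℝ} (hξ : Irrational ξ)
    (hξ0 : 0 < ξ) (hε : 0 < ε) : ∃ s t : ℕ, (s * ξ - t ≠ 0) ∧ |s * ξ - t| < ε := by
  obtain ⟨n, hn⟩ := exists_nat_one_div_lt (lt_min hε hξ0)
  obtain ⟨t, s, hs, -, hst⟩ := Real.exists_int_int_abs_mul_sub_le ξ n.succ_pos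
  have hdiv : 1 / ((n.succ : ℝ) + 1) ≤ 1 / (n + 1) := by gcongr; linarith
  have hsmall : |s * ξ - t| < min ε ξ := (hst.trans hdiv).trans_lt hn
  lift s to ℕ using hs.le
  push_cast at hsmall
  have ht : 0 ≤ t := by
    have hsξ : ξ ≤ s * ξ := le_mul_of_one_le_left hξ0.le (by exact_mod_cast hs)
    have : (0 : ℝ) < t := by
      linarith [(abs_lt.1 (hsmall.trans_le (min_le_right ε ξ))).2]
    exact_mod_cast this.le
  lift t to ℕ using ht
  push_cast at hsmall
  refine ⟨s, t, ?_, hsmall.trans_le (min_le_left ε ξ)⟩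
  exact sub_ne_zero.2 ((hξ.natCast_mul (by exact_mod_cast hs.ne')).ne_nat t)

lemma irrational_log_div_log_s9 {x y : ℝ} (hx : 1 < x) (hy : 1 < y)
    (hxy : ∀ s t : ℕ, x ^ s = y ^ t → s = 0 ∧ t = 0) :
    Irrational (log x / log y) := by
  rintro ⟨q, hq⟩
  have hlogy := log_pos hy
  have hq0 : (0 : ℝ) ≤ q := hq ▸ (div_pos (log_pos hx) hlogy).le
  obtain ⟨m, hm⟩ := Int.eq_ofNat_of_zero_le (Rat.num_nonneg.2 (by exact_mod_cast hq0))
  have hden : (q.den : ℝ) * log x = m * log y := by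
    have := congrArg (fun r : ℚ => (r : ℝ)) q.mul_den_eq_num
    push_cast [hm, hq] at this
    field_simp at this
    linarith
  have hlog : log (x ^ q.den) = log (y ^ m) := by rw [log_pow, log_pow, hden]
  have hpow := log_injOn_pos (Set.mem_Ioi.2 (pow_pos (zero_lt_one.trans hx) q.den))
    (Set.mem_Ioi.2 (pow_pos (zero_lt_one.trans hy) m)) hlog
  exact q.den_nz (hxy _ _ hpow).1

lemma dense_addSubmonoidClosure_log_neg_log {x y : ℝ} (hx : 1 < x) (hy : 1 < y)
    (hxy : ∀ s t : ℕ, x ^ s = y ^ t → s = 0 ∧ t = 0) :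
    Dense (AddSubmonoid.closure {log x, -log y} : Set ℝ) := by
  have hlogx := log_pos hx
  have hlogy := log_pos hy
  refine AddSubmonoid.dense_of_exists_abs_lt_s9 (AddSubmonoid.subset_closure (by simp)) hlogx
    (AddSubmonoid.subset_closure (by simp)) (neg_neg_of_pos hlogy) fun ε hε => ?_
  obtain ⟨s, t, hne, hlt⟩ :=
    (irrational_log_div_log_s9 hx hy hxy).exists_nat_mul_sub_nat_ne_zero_abs_lt
      (div_pos hlogx hlogy) (div_pos hε hlogy)
  have hg : s • log x + t • -log y = log y * (s * (log x / log y) - t) := by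
    simp only [nsmul_eq_mul]
    field_simp
    ring
  refine ⟨_, (AddSubmonoid.mem_closure_pair _ _ _).2 ⟨s, t, rfl⟩, ?_, ?_⟩
  · rw [hg]
    exact mul_ne_zero hlogy.ne' hne
  · rw [hg, abs_mul, abs_of_pos hlogy, ← lt_div_iff₀' hlogy]
    exact hlt

theorem exists_pow_div_pow_mem_Ioo {x y b₁ b₂ : ℝ} (hx : 1 < x) (hy : 1 < y)
    (hxy : ∀ s t : ℕ, x ^ s = y ^ t → s = 0 ∧ t = 0) (hb₁ : 0 < b₁) (hb : b₁ < b₂) :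
    ∃ s t : ℕ, x ^ s / y ^ t ∈ Ioo b₁ b₂ := by
  obtain ⟨z, hzM, hz⟩ :=
    (dense_addSubmonoidClosure_log_neg_log hx hy hxy).exists_between (log_lt_log hb₁ hb)
  obtain ⟨s, t, rfl⟩ := (AddSubmonoid.mem_closure_pair _ _ _).1 hzM
  have hpos : 0 < x ^ s / y ^ t := by positivity
  have hlog : log (x ^ s / y ^ t) = s • log x + t • -log y := by
    rw [log_div (by positivity) (by positivity), log_pow, log_pow]
    simp only [nsmul_eq_mul]
    ring
  rw [← hlog] at hz
  exact ⟨s, t, (log_lt_log_iff hb₁ hpos).1 hz.1, (log_lt_log_iff hpos (hb₁.trans hb)).1 hz.2⟩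

theorem ratio_in_interval_large_exponent_general (k l : ℕ) (hk : 2 ≤ k) (hl : 2 ≤ l)
    (hmi : ∀ s t : ℕ, k ^ s = l ^ t → s = 0 ∧ t = 0)
    (b₁ b₂ : ℝ) (hb₁ : 0 < b₁) (hb : b₁ < b₂) :
    ∀ t₀ : ℕ, ∃ s t : ℕ, t₀ < t ∧
      b₁ < (k : ℝ) ^ s / (l : ℝ) ^ t ∧ (k : ℝ) ^ s / (l : ℝ) ^ t < b₂ := by
  intro t₀
  have hk' : (1 : ℝ) < k := by exact_mod_cast hk
  have hl' : (1 : ℝ) < l := by exact_mod_cast hl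
  have hmi' : ∀ s t : ℕ, (k : ℝ) ^ s = (l : ℝ) ^ t → s = 0 ∧ t = 0 := fun s t h =>
    hmi s t (by exact_mod_cast h)
  have hL : (0 : ℝ) < (l : ℝ) ^ (t₀ + 1) := by positivity
  obtain ⟨s, t, hlo, hhi⟩ := exists_pow_div_pow_mem_Ioo hk' hl' hmi' (mul_pos hb₁ hL)
    (mul_lt_mul_of_pos_right hb hL)
  refine ⟨s, t + (t₀ + 1), by omega, ?_⟩
  rw [pow_add, ← div_div, lt_div_iff₀ hL, div_lt_iff₀ hL]
  exact ⟨hlo, hhi⟩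

/-- For multiplicatively independent `k, ℓ ≥ 2`, positive reals `b₁ < b₂` and
`a < b₁`, for every `t₀ ∈ ℕ` there exist `s, t ∈ ℕ` with `t > t₀` and
`b₁ < k^s/ℓ^t < b₂`. -/
theorem ratio_in_interval_large_exponent (k l : ℕ) (hk : 2 ≤ k) (hl : 2 ≤ l)
    (hmi : ∀ s t : ℕ, k ^ s = l ^ t → s = 0 ∧ t = 0)
    (a b₁ b₂ : ℝ) (hb₁ : 0 < b₁) (hb : b₁ < b₂) (ha : a < b₁) :
    ∀ t₀ : ℕ, ∃ s t : ℕ, t₀ < t ∧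
      b₁ < (k : ℝ) ^ s / (l : ℝ) ^ t ∧ (k : ℝ) ^ s / (l : ℝ) ^ t < b₂ :=
  ratio_in_interval_large_exponent_general k l hk hl hmi b₁ b₂ hb₁ hb
end

section
/- Let λ > 0 be irrational and a > 0 real. Then for every non-empty open interval I ⊆ (a, ∞), the set {s - t·λ : s, t ∈ ℕ} intersects log(I) in infinitely many points with t arbitrarily large and s ≥ 0. -/
/-!
By Dirichlet's approximation theorem some `h = j - k * λ` with `j k : ℕ` is nonzero and shorter
than `log '' (b₁, b₂) = (log b₁, log b₂)`. For every `t₀`, the numbers `s - t * λ` with `s, t : ℕ`,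
`t₀ < t` are closed under adding `h` and lie on both sides of that interval, so stepping by `h`
from the appropriate side lands inside it. Irrationality makes `s - t * λ` determine `t`, so the
points obtained for ever larger `t₀` are pairwise distinct.
-/

open Set Filter

section Archimedean

variable {G : Type*} [AddCommGroup G] [LinearOrder G] [IsOrderedAddMonoid G] [Archimedean G]

theorem exists_add_nsmul_mem_Ioc {h : G} (hh : 0 < h) {y c : G} (hyc : y ≤ c) :
    ∃ n : ℕ, y + n • h ∈ Ioc c (c + h) := by
  obtain ⟨m, hm, -⟩ := existsUnique_add_zsmul_mem_Ioc hh y c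
  have hm_pos : (0 : ℤ) • h < m • h := by
    rw [zero_zsmul]
    exact (lt_add_iff_pos_right y).mp (hyc.trans_lt hm.1)
  lift m to ℕ using ((zsmul_lt_zsmul_iff_left hh).mp hm_pos).le
  exact ⟨m, by simpa using hm⟩

theorem exists_add_nsmul_mem_Ico {h : G} (hh : h < 0) {y c : G} (hcy : c ≤ y) :
    ∃ n : ℕ, y + n • h ∈ Ico (c + h) c := by
  obtain ⟨n, hn⟩ := exists_add_nsmul_mem_Ioc (neg_pos.2 hh) (neg_le_neg hcy)
  rw [smul_neg, ← neg_add, ← neg_add] at hn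
  simp only [mem_Ioc, neg_lt_neg_iff, neg_le_neg_iff] at hn
  exact ⟨n, hn.2, hn.1⟩

theorem exists_mem_Ioo_of_forall_add_mem {A : Set G} {h c₁ c₂ : G}
    (hA : ∀ x ∈ A, x + h ∈ A) (h0 : h ≠ 0) (hlt : |h| < c₂ - c₁)
    (hlow : ∃ x ∈ A, x ≤ c₁) (hhigh : ∃ x ∈ A, c₂ ≤ x) : ∃ x ∈ A, x ∈ Ioo c₁ c₂ := by
  have hA_nsmul : ∀ x ∈ A, ∀ n : ℕ, x + n • h ∈ A := by
    intro x hx n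
    induction n with
    | zero => simpa using hx
    | succ n ih => simpa [succ_nsmul, add_assoc] using hA _ ih
  rcases h0.lt_or_gt with hneg | hpos
  · obtain ⟨y, hy, hcy⟩ := hhigh
    obtain ⟨n, hn⟩ := exists_add_nsmul_mem_Ico hneg hcy
    rw [abs_of_neg hneg] at hlt
    exact ⟨_, hA_nsmul y hy n, (neg_lt_sub_iff_lt_add'.mp hlt).trans_le hn.1, hn.2⟩
  · obtain ⟨y, hy, hyc⟩ := hlow
    obtain ⟨n, hn⟩ := exists_add_nsmul_mem_Ioc hpos hyc
    rw [abs_of_pos hpos] at hlt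
    exact ⟨_, hA_nsmul y hy n, hn.1, hn.2.trans_lt (lt_sub_iff_add_lt'.mp hlt)⟩

end Archimedean

namespace Irrational

variable {lam : ℝ}

theorem exists_nat_sub_nat_mul_ne_zero_abs_lt (hlam : Irrational lam) (hpos : 0 < lam)
    {ε : ℝ} (hε : 0 < ε) : ∃ j k : ℕ, (j : ℝ) - k * lam ≠ 0 ∧ |(j : ℝ) - k * lam| < ε := by
  obtain ⟨n, hn⟩ := exists_nat_one_div_lt hε
  obtain ⟨k, hk, -, hround⟩ := Real.exists_nat_abs_mul_sub_round_le lam n.succ_pos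
  have hround_nonneg : 0 ≤ round (k * lam) := by
    rw [round_eq]
    exact Int.floor_nonneg.2 (by positivity)
  lift round (k * lam) to ℕ using hround_nonneg with j
  refine ⟨j, k, sub_ne_zero.2 ((hlam.natCast_mul hk.ne').ne_nat j).symm, ?_⟩
  rw [abs_sub_comm]
  calc |k * lam - j| ≤ 1 / ((n + 1 : ℕ) + 1) := by exact_mod_cast hround
    _ ≤ 1 / (n + 1) := by gcongr; linarith
    _ < ε := hn

theorem exists_nat_sub_nat_mul_mem_Ioo (hlam : Irrational lam) (hpos : 0 < lam)
    {c₁ c₂ : ℝ} (hc : c₁ < c₂) (t₀ : ℕ) :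
    ∃ s t : ℕ, t₀ < t ∧ (s : ℝ) - t * lam ∈ Ioo c₁ c₂ := by
  obtain ⟨j, k, hne, hlt⟩ := hlam.exists_nat_sub_nat_mul_ne_zero_abs_lt hpos (sub_pos.2 hc)
  set A := {x : ℝ | ∃ s t : ℕ, t₀ < t ∧ (s : ℝ) - t * lam = x}
  have hA : ∀ x ∈ A, x + (j - k * lam) ∈ A := by
    rintro _ ⟨s, t, ht, rfl⟩
    exact ⟨s + j, t + k, by omega, by push_cast; ring⟩
  have hlow : ∃ x ∈ A, x ≤ c₁ := by
    obtain ⟨t, ht₀, ht⟩ := ((eventually_gt_atTop t₀).and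
      ((tendsto_natCast_atTop_atTop.atTop_mul_const hpos).eventually_ge_atTop (-c₁))).exists
    exact ⟨-(t * lam), ⟨0, t, ht₀, by simp⟩, by linarith⟩
  have hhigh : ∃ x ∈ A, c₂ ≤ x := by
    obtain ⟨s, hs⟩ := exists_nat_ge (c₂ + (t₀ + 1 : ℕ) * lam)
    exact ⟨_, ⟨s, t₀ + 1, t₀.lt_succ_self, rfl⟩, by linarith⟩
  obtain ⟨_, ⟨s, t, ht, rfl⟩, hx⟩ := exists_mem_Ioo_of_forall_add_mem hA hne hlt hlow hhigh
  exact ⟨s, t, ht, hx⟩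

theorem injective_natCast_sub_natCast_mul (hlam : Irrational lam) :
    Function.Injective fun p : ℕ × ℕ => (p.1 : ℝ) - p.2 * lam := by
  rintro ⟨s, t⟩ ⟨s', t'⟩ h
  have ht : t = t' := by
    by_contra hne
    have hsub : (t : ℤ) - t' ≠ 0 := sub_ne_zero.2 (by exact_mod_cast hne)
    refine (hlam.intCast_mul hsub).ne_int ((s : ℤ) - s') ?_
    push_cast
    linarith
  subst ht
  simpa using h

end Irrational

/-- For irrational `λ > 0` and `a > 0`, for every non-empty open interval
`I = (b₁, b₂) ⊆ (a, ∞)`, the set `{s - t·λ : s, t ∈ ℕ}` meets `log(I)` in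
infinitely many points, with `t` arbitrarily large (and `s ≥ 0`). -/
theorem nat_comb_meets_log_interval (lam : ℝ) (hlam : Irrational lam)
    (hlampos : 0 < lam) (a : ℝ) (ha : 0 < a)
    (b₁ b₂ : ℝ) (hab : a ≤ b₁) (hb : b₁ < b₂) :
    ({x : ℝ | ∃ s t : ℕ, x = (s : ℝ) - (t : ℝ) * lam ∧
        x ∈ Real.log '' Set.Ioo b₁ b₂}.Infinite) ∧
    ∀ t₀ : ℕ, ∃ s t : ℕ, t₀ < t ∧
      ((s : ℝ) - (t : ℝ) * lam) ∈ Real.log '' Set.Ioo b₁ b₂ := by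
  have hb₁ : 0 < b₁ := ha.trans_le hab
  rw [Real.image_log_Ioo hb₁ hb.le]
  have hdense := hlam.exists_nat_sub_nat_mul_mem_Ioo hlampos (Real.log_lt_log hb₁ hb)
  refine ⟨?_, hdense⟩
  set P := {p : ℕ × ℕ | (p.1 : ℝ) - p.2 * lam ∈ Ioo (Real.log b₁) (Real.log b₂)}
  have hP : (Prod.snd '' P).Infinite := infinite_of_forall_exists_gt fun t₀ ↦
    let ⟨s, t, ht, hx⟩ := hdense t₀
    ⟨t, ⟨(s, t), hx, rfl⟩, ht⟩
  refine ((hP.of_image _).image hlam.injective_natCast_sub_natCast_mul.injOn).mono ?_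
  rintro _ ⟨⟨s, t⟩, hp, rfl⟩
  exact ⟨s, t, rfl, hp⟩
end
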